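/- arXiv:1309.0394 — 6 statements merged into one kernel-verified Lean document; each statement's English description precedes it below -/
import Mathlib

section
/- For positive integers a and b, the set C(a,b) of equivalence classes of nondecreasing maps f: ℤ → ℤ satisfying f(x+a) = f(x) + b for all x, under the equivalence f ∼ g iff there exists k ∈ ℤ with g(x) = f(x) + k·b for all x, is finite. -/
/-- The set `I(a,b)` of nondecreasing maps `f : ℤ → ℤ` with `f (x + a) = f x + b`. -/
def IntMaps (a b : ℤ) : Type :=
  {f : ℤ → ℤ // Monotone f ∧ ∀ x, f (x + a) = f x + b}

/-- The relation `f ∼ g ↔ ∃ k, ∀ x, g x = f x + k * b`. -/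
def IntRel (a b : ℤ) (f g : IntMaps a b) : Prop :=
  ∃ k : ℤ, ∀ x, g.1 x = f.1 x + k * b

/-! Subtracting the multiple `(f 0 / b) * b` of `b` from `f` picks a canonical representative
of its class, taking the value `f 0 % b ∈ [0, b)` at `0`. By monotonicity and
`f (x + a) = f x + b` its values on `[0, a)` lie in `[0, 2b)`, and they determine it. So `C(a,b)`
embeds into the finite set of maps `[0, a) → [0, 2b)`. -/

section Translation

variable {a b : ℤ} {f g : ℤ → ℤ}

theorem map_add_mul_of_map_add (hf : ∀ x, f (x + a) = f x + b) (k x : ℤ) :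
    f (x + k * a) = f x + k * b := by
  induction k using Int.induction_on generalizing x with
  | zero => simp
  | succ n ih =>
    rw [show x + (n + 1) * a = x + n * a + a by ring, hf, ih]
    ring
  | pred n ih =>
    have h := hf (x - a)
    rw [sub_add_cancel] at h
    rw [show x + (-n - 1) * a = x - a + -n * a by ring, ih, h]
    ring

theorem eq_of_eqOn_Ico_of_map_add (ha : 0 < a) (hf : ∀ x, f (x + a) = f x + b)
    (hg : ∀ x, g (x + a) = g x + b) (h : Set.EqOn f g (Set.Ico 0 a)) : f = g := by
  funext x
  have hmod : x % a ∈ Set.Ico 0 a := ⟨Int.emod_nonneg x ha.ne', Int.emod_lt_of_pos x ha⟩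
  rw [← Int.emod_add_ediv_mul x a, map_add_mul_of_map_add hf,
    map_add_mul_of_map_add hg, h hmod]

end Translation

namespace IntMaps

variable {a b : ℤ}

noncomputable def normalize (f : IntMaps a b) (x : ℤ) : ℤ :=
  f.1 x - f.1 0 / b * b

theorem normalize_map_add (f : IntMaps a b) (x : ℤ) :
    f.normalize (x + a) = f.normalize x + b := by
  simp only [normalize, f.2.2]
  ring

theorem normalize_mem_Ico (hb : 0 < b) (f : IntMaps a b) {x : ℤ} (hx : x ∈ Set.Ico 0 a) :
    f.normalize x ∈ Set.Ico 0 (2 * b) := by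
  have hlow : f.1 0 ≤ f.1 x := f.2.1 hx.1
  have hup : f.1 x ≤ f.1 0 + b := by
    rw [← f.2.2, zero_add]
    exact f.2.1 hx.2.le
  have hmod := Int.emod_add_ediv_mul (f.1 0) b
  have : 0 ≤ f.1 0 % b := Int.emod_nonneg _ hb.ne'
  have : f.1 0 % b < b := Int.emod_lt_of_pos _ hb
  constructor <;> simp only [normalize] <;> linarith

theorem normalize_eq_iff (hb : b ≠ 0) (f g : IntMaps a b) :
    f.normalize = g.normalize ↔ IntRel a b f g := by
  constructor
  · intro h
    refine ⟨g.1 0 / b - f.1 0 / b, fun x => ?_⟩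
    have := congrFun h x
    simp only [normalize] at this
    linarith
  · rintro ⟨k, hk⟩
    funext x
    simp only [normalize, hk, Int.add_mul_ediv_right _ _ hb]
    ring

end IntMaps

/-- For positive `a, b`, the set `C(a,b)` of equivalence classes is finite. -/
theorem stmt0 (a b : ℤ) (ha : 0 < a) (hb : 0 < b) :
    Finite (Quot (IntRel a b)) := by
  let Φ : Quot (IntRel a b) → Set.Ico (0 : ℤ) a → Set.Ico (0 : ℤ) (2 * b) :=
    Quot.lift (fun f x => ⟨f.normalize x, f.normalize_mem_Ico hb x.2⟩)
      fun f g hfg => funext fun x =>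
        Subtype.ext (congrFun ((IntMaps.normalize_eq_iff hb.ne' f g).2 hfg) x)
  refine Finite.of_injective Φ ?_
  rintro ⟨f⟩ ⟨g⟩ h
  refine Quot.sound ((IntMaps.normalize_eq_iff hb.ne' f g).1 ?_)
  refine eq_of_eqOn_Ico_of_map_add ha f.normalize_map_add g.normalize_map_add fun x hx => ?_
  exact congrArg Subtype.val (congrFun h ⟨x, hx⟩)
end

section
/- For any f ∈ I(n+1, m+1) (a nondecreasing map ℤ → ℤ with f(x + n+1) = f(x) + m+1) and any interval I = [y, y+m] ⊂ ℤ, the preimage f⁻¹(I) is a nonempty interval of the form [x, x+n] for some x ∈ ℤ. -/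
/-!
Let `x` be the least integer with `y ≤ f x`; it exists because `f` is monotone and, by
`f (x + p) = f x + q` with `q > 0`, unbounded in both directions. Then `f ⁻¹' [y, ∞) = [x, ∞)`,
and translating by the period gives `f ⁻¹' [y + q, ∞) = [x + p, ∞)`. Subtracting,
`f ⁻¹' [y, y + q) = [x, x + p)`.
-/

open Set

namespace Int

variable {f : ℤ → ℤ} {p q : ℤ}

theorem map_add_mul_of_map_add (h : ∀ x, f (x + p) = f x + q) (x k : ℤ) :
    f (x + k * p) = f x + k * q := by
  induction k using Int.induction_on with
  | zero => simp
  | succ k ih =>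
    rw [add_one_mul, ← add_assoc, h, ih]
    ring
  | pred k ih =>
    have step := h (x + (-k - 1) * p)
    rw [show x + (-k - 1) * p + p = x + -k * p by ring, ih] at step
    linarith

theorem exists_le_map_of_map_add (hq : 0 < q) (h : ∀ x, f (x + p) = f x + q) (y : ℤ) :
    ∃ x, y ≤ f x := by
  refine ⟨0 + |y - f 0| * p, ?_⟩
  have : |y - f 0| ≤ |y - f 0| * q := le_mul_of_one_le_right (abs_nonneg _) hq
  rw [map_add_mul_of_map_add h]
  linarith [le_abs_self (y - f 0)]

theorem exists_map_lt_of_map_add (hq : 0 < q) (h : ∀ x, f (x + p) = f x + q) (y : ℤ) :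
    ∃ x, f x < y := by
  refine ⟨0 + -(|f 0 - y| + 1) * p, ?_⟩
  have : |f 0 - y| + 1 ≤ (|f 0 - y| + 1) * q := le_mul_of_one_le_right (by positivity) hq
  rw [map_add_mul_of_map_add h]
  linarith [le_abs_self (f 0 - y)]

theorem _root_.Monotone.exists_preimage_Ici_eq_Ici {α : Type*} [Preorder α] {g : ℤ → α}
    (hg : Monotone g) {y : α} (hlt : ∃ a, g a < y) (hle : ∃ b, y ≤ g b) :
    ∃ x, g ⁻¹' Ici y = Ici x := by
  obtain ⟨a, ha⟩ := hlt
  have hbdd : ∃ a, ∀ b, y ≤ g b → a ≤ b := ⟨a, fun b hb => (hg.reflect_lt (ha.trans_le hb)).le⟩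
  obtain ⟨x, hx, hleast⟩ := Int.exists_least_of_bdd hbdd hle
  exact ⟨x, Set.ext fun z => ⟨hleast z, fun hz => hx.trans (hg hz)⟩⟩

theorem preimage_Ici_add_of_map_add (h : ∀ x, f (x + p) = f x + q) {x y : ℤ}
    (hxy : f ⁻¹' Ici y = Ici x) : f ⁻¹' Ici (y + q) = Ici (x + p) := by
  ext z
  have hz : y ≤ f (z - p) ↔ x ≤ z - p := Set.ext_iff.mp hxy (z - p)
  have hshift : f z = f (z - p) + q := by rw [← h, sub_add_cancel]
  simp only [mem_preimage, mem_Ici, hshift]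
  omega

theorem _root_.Monotone.exists_preimage_Ico_eq_Ico (hf : Monotone f) (hq : 0 < q)
    (h : ∀ x, f (x + p) = f x + q) (y : ℤ) :
    ∃ x, f ⁻¹' Ico y (y + q) = Ico x (x + p) := by
  obtain ⟨x, hx⟩ := hf.exists_preimage_Ici_eq_Ici (exists_map_lt_of_map_add hq h y)
    (exists_le_map_of_map_add hq h y)
  refine ⟨x, ?_⟩
  rw [← Ici_inter_Iio, ← Ici_inter_Iio, ← compl_Ici, ← compl_Ici, preimage_inter,
    preimage_compl, hx, preimage_Ici_add_of_map_add h hx]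

end Int

theorem stmt2_general (n m : ℤ) (hm : 0 ≤ m) (f : ℤ → ℤ)
    (hmono : Monotone f) (hper : ∀ x, f (x + (n + 1)) = f x + (m + 1)) (y : ℤ) :
    ∃ x : ℤ, f ⁻¹' (Set.Icc y (y + m)) = Set.Icc x (x + n) := by
  obtain ⟨x, hx⟩ := hmono.exists_preimage_Ico_eq_Ico (by omega) hper y
  refine ⟨x, ?_⟩
  rwa [← add_assoc, ← add_assoc, Ico_add_one_right_eq_Icc, Ico_add_one_right_eq_Icc] at hx

/-- For `f ∈ I(n+1, m+1)` and any interval `[y, y+m] ⊂ ℤ`, the preimage `f⁻¹([y, y+m])`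
is a (nonempty) interval of the form `[x, x+n]`. -/
theorem stmt2 (n m : ℤ) (hn : 0 ≤ n) (hm : 0 ≤ m) (f : ℤ → ℤ)
    (hmono : Monotone f) (hper : ∀ x, f (x + (n + 1)) = f x + (m + 1)) (y : ℤ) :
    ∃ x : ℤ, f ⁻¹' (Set.Icc y (y + m)) = Set.Icc x (x + n) :=
  stmt2_general n m hm f hmono hper y
end

section
/- Let (G,P) be a left-ordered group and z ∈ P a central element with z > 1. Define G' = {g ∈ G : ∃n ∈ ℕ, z^{−n} ≤ g ≤ z^n}. Then G' is a subgroup of G, and every element of G' can be written uniquely as z^k·v with k ∈ ℤ and v ∈ [1, z) = {x : 1 ≤ x < z}. -/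
/-- The left-invariant order on a left-ordered group `(G,P)`: `a ≤ b ↔ a⁻¹b ∈ P`. -/
def leP {G : Type*} [Group G] (P : Set G) (a b : G) : Prop := a⁻¹ * b ∈ P

/-- `G' = {g : ∃ n ∈ ℕ, z^{-n} ≤ g ≤ z^n}`. -/
def Gprime {G : Type*} [Group G] (P : Set G) (z : G) : Set G :=
  {g | ∃ n : ℕ, leP P (z ^ (-(n : ℤ))) g ∧ leP P g (z ^ (n : ℤ))}

/-!
Right multiplication by a central element preserves the left order, and `z⁻¹ ∉ P` since
`z ∈ P`, `z ≠ 1`; hence `k ↦ z^k` is an order embedding of `ℤ`. Both bounds defining `G'` are then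
preserved by products and swapped by inversion. For `g ∈ G'` the exponents `k` with
`z^k ≤ g` form a nonempty set of integers bounded above by the `n` witnessing `g ∈ G'`;
its maximum `k` is the unique exponent with `z^k ≤ g < z^{k+1}`, and by left invariance
this is the same as `1 ≤ z^{-k} g < z`.
-/

section LeftOrder

variable {G : Type*} [Group G] {P : Set G} {a b c : G}

theorem one_mem_of_union_inv_eq_univ (hP3 : P ∪ P⁻¹ = Set.univ) : (1 : G) ∈ P := by
  have h : (1 : G) ∈ P ∪ P⁻¹ := hP3 ▸ Set.mem_univ 1
  rcases h with h | h
  · exact h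
  · simpa using h

theorem leP_refl (hP3 : P ∪ P⁻¹ = Set.univ) (a : G) : leP P a a := by
  simpa [leP] using one_mem_of_union_inv_eq_univ hP3

theorem leP_trans (hP1 : ∀ a ∈ P, ∀ b ∈ P, a * b ∈ P) (hab : leP P a b) (hbc : leP P b c) :
    leP P a c := by
  simpa [leP, mul_assoc] using hP1 _ hab _ hbc

theorem leP_antisymm (hP2 : P ∩ P⁻¹ = {1}) (hab : leP P a b) (hba : leP P b a) : a = b := by
  have h : a⁻¹ * b ∈ P ∩ P⁻¹ := ⟨hab, by simpa [leP] using hba⟩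
  rw [hP2, Set.mem_singleton_iff, inv_mul_eq_one] at h
  exact h

theorem leP_total (hP3 : P ∪ P⁻¹ = Set.univ) (a b : G) : leP P a b ∨ leP P b a := by
  have h : a⁻¹ * b ∈ P ∪ P⁻¹ := hP3 ▸ Set.mem_univ _
  simpa [leP] using h

theorem leP_and_ne_iff_not_leP (hP2 : P ∩ P⁻¹ = {1}) (hP3 : P ∪ P⁻¹ = Set.univ) :
    leP P a b ∧ a ≠ b ↔ ¬ leP P b a := by
  constructor
  · rintro ⟨hab, hne⟩ hba
    exact hne (leP_antisymm hP2 hab hba)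
  · intro hba
    refine ⟨(leP_total hP3 a b).resolve_right hba, ?_⟩
    rintro rfl
    exact hba (leP_refl hP3 a)

theorem leP_mul_left_iff (c : G) : leP P (c * a) (c * b) ↔ leP P a b := by
  simp [leP, mul_assoc]

theorem leP_mul_right_iff_of_mem_center (hc : c ∈ Subgroup.center G) :
    leP P (a * c) (b * c) ↔ leP P a b := by
  have h : (a * c)⁻¹ * (b * c) = a⁻¹ * b := by
    rw [mul_inv_rev, mul_assoc, ← mul_assoc a⁻¹, Subgroup.mem_center_iff.mp hc (a⁻¹ * b),
      inv_mul_cancel_left]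
  rw [leP, leP, h]

theorem leP_inv_inv_iff_of_commute (h : Commute a b) : leP P b⁻¹ a⁻¹ ↔ leP P a b := by
  rw [leP, leP, inv_inv, (h.inv_left).eq]

end LeftOrder

section CentralElement

variable {G : Type*} [Group G] {P : Set G} {z : G}

theorem zpow_mem_of_nonneg (hP1 : ∀ a ∈ P, ∀ b ∈ P, a * b ∈ P) (hP3 : P ∪ P⁻¹ = Set.univ)
    (hz : z ∈ P) {k : ℤ} (hk : 0 ≤ k) : z ^ k ∈ P := by
  lift k to ℕ using hk
  rw [zpow_natCast]
  induction k with
  | zero => simpa using one_mem_of_union_inv_eq_univ hP3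
  | succ k ih => simpa [pow_succ] using hP1 _ ih _ hz

/-- If `z^k ∈ P` with `k < 0`, then `z^{-1} = z^k z^{-k-1} ∈ P`, forcing `z = 1`. -/
theorem nonneg_of_zpow_mem (hP1 : ∀ a ∈ P, ∀ b ∈ P, a * b ∈ P) (hP2 : P ∩ P⁻¹ = {1})
    (hP3 : P ∪ P⁻¹ = Set.univ) (hz : z ∈ P) (hz1 : z ≠ 1) {k : ℤ} (hk : z ^ k ∈ P) :
    0 ≤ k := by
  by_contra! hneg
  have hinv : z⁻¹ ∈ P := by
    have h := hP1 _ hk _ (zpow_mem_of_nonneg hP1 hP3 hz (k := -k - 1) (by omega))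
    rwa [← zpow_add, show k + (-k - 1) = -1 by ring, zpow_neg_one] at h
  have h : z ∈ P ∩ P⁻¹ := ⟨hz, hinv⟩
  rw [hP2] at h
  exact hz1 h

theorem leP_zpow_zpow_of_le (hP1 : ∀ a ∈ P, ∀ b ∈ P, a * b ∈ P) (hP3 : P ∪ P⁻¹ = Set.univ)
    (hz : z ∈ P) {m n : ℤ} (h : m ≤ n) : leP P (z ^ m) (z ^ n) := by
  rw [leP, ← zpow_neg, ← zpow_add]
  exact zpow_mem_of_nonneg hP1 hP3 hz (by omega)

theorem le_of_leP_zpow_zpow (hP1 : ∀ a ∈ P, ∀ b ∈ P, a * b ∈ P) (hP2 : P ∩ P⁻¹ = {1})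
    (hP3 : P ∪ P⁻¹ = Set.univ) (hz : z ∈ P) (hz1 : z ≠ 1) {m n : ℤ}
    (h : leP P (z ^ m) (z ^ n)) : m ≤ n := by
  rw [leP, ← zpow_neg, ← zpow_add] at h
  linarith [nonneg_of_zpow_mem hP1 hP2 hP3 hz hz1 h]

def Gprime.subgroup (hP1 : ∀ a ∈ P, ∀ b ∈ P, a * b ∈ P) (hP3 : P ∪ P⁻¹ = Set.univ)
    (hzc : z ∈ Subgroup.center G) : Subgroup G where
  carrier := Gprime P z
  one_mem' := ⟨0, by simpa using leP_refl hP3 (1 : G), by simpa using leP_refl hP3 (1 : G)⟩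
  mul_mem' := by
    rintro a b ⟨n, han, hna⟩ ⟨m, hbm, hmb⟩
    refine ⟨n + m, ?_, ?_⟩
    · have h₁ : leP P (z ^ (-(n : ℤ)) * z ^ (-(m : ℤ))) (a * z ^ (-(m : ℤ))) :=
        (leP_mul_right_iff_of_mem_center (zpow_mem hzc _)).2 han
      have h₂ : leP P (a * z ^ (-(m : ℤ))) (a * b) := (leP_mul_left_iff a).2 hbm
      rw [Nat.cast_add, neg_add, zpow_add]
      exact leP_trans hP1 h₁ h₂
    · have h₁ : leP P (a * b) (a * z ^ (m : ℤ)) := (leP_mul_left_iff a).2 hmb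
      have h₂ : leP P (a * z ^ (m : ℤ)) (z ^ (n : ℤ) * z ^ (m : ℤ)) :=
        (leP_mul_right_iff_of_mem_center (zpow_mem hzc _)).2 hna
      rw [Nat.cast_add, zpow_add]
      exact leP_trans hP1 h₁ h₂
  inv_mem' := by
    rintro g ⟨n, hng, hgn⟩
    refine ⟨n, ?_, ?_⟩
    · rw [zpow_neg]
      exact (leP_inv_inv_iff_of_commute (Subgroup.mem_center_iff.mp (zpow_mem hzc _) g)).2 hgn
    · simpa [zpow_neg] using
        (leP_inv_inv_iff_of_commute (Subgroup.mem_center_iff.mp (zpow_mem hzc _) g).symm).2 hng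

theorem exists_zpow_leP_not_leP_zpow_add_one (hP1 : ∀ a ∈ P, ∀ b ∈ P, a * b ∈ P)
    (hP2 : P ∩ P⁻¹ = {1}) (hP3 : P ∪ P⁻¹ = Set.univ) (hz : z ∈ P) (hz1 : z ≠ 1) {g : G}
    (hg : g ∈ Gprime P z) : ∃ k : ℤ, leP P (z ^ k) g ∧ ¬ leP P (z ^ (k + 1)) g := by
  obtain ⟨n, hng, hgn⟩ := hg
  have hbdd : ∀ m : ℤ, leP P (z ^ m) g → m ≤ n := fun m hm =>
    le_of_leP_zpow_zpow hP1 hP2 hP3 hz hz1 (leP_trans hP1 hm hgn)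
  obtain ⟨k, hk, hmax⟩ := Int.exists_greatest_of_bdd ⟨n, hbdd⟩ ⟨-n, hng⟩
  exact ⟨k, hk, fun h => by linarith [hmax _ h]⟩

theorem eq_of_zpow_leP_not_leP_zpow_add_one (hP1 : ∀ a ∈ P, ∀ b ∈ P, a * b ∈ P)
    (hP3 : P ∪ P⁻¹ = Set.univ) (hz : z ∈ P) {g : G} {j k : ℤ}
    (hj : leP P (z ^ j) g) (hj' : ¬ leP P (z ^ (j + 1)) g)
    (hk : leP P (z ^ k) g) (hk' : ¬ leP P (z ^ (k + 1)) g) : j = k := by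
  have hle : ∀ {i l : ℤ}, leP P (z ^ l) g → ¬ leP P (z ^ (i + 1)) g → l ≤ i := by
    intro i l hl hi
    by_contra! h
    exact hi (leP_trans hP1 (leP_zpow_zpow_of_le hP1 hP3 hz h) hl)
  exact le_antisymm (hle hj hk') (hle hk hj')

theorem leP_one_and_lt_iff_zpow_mul (hP2 : P ∩ P⁻¹ = {1}) (hP3 : P ∪ P⁻¹ = Set.univ)
    (k : ℤ) (v : G) : (leP P 1 v ∧ leP P v z ∧ v ≠ z) ↔
      (leP P (z ^ k) (z ^ k * v) ∧ ¬ leP P (z ^ (k + 1)) (z ^ k * v)) := by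
  have h₁ : leP P (z ^ k) (z ^ k * v) ↔ leP P 1 v := by
    simpa using leP_mul_left_iff (P := P) (z ^ k) (a := 1) (b := v)
  rw [h₁, zpow_add_one, leP_mul_left_iff, leP_and_ne_iff_not_leP hP2 hP3]

end CentralElement

/-- For a left-ordered group `(G,P)` and a central `z > 1`, the set `G'` is a subgroup,
and every element of `G'` is uniquely `z^k · v` with `k ∈ ℤ`, `v ∈ [1, z)`. -/
theorem stmt9 (G : Type*) [Group G] (P : Set G)
    (hP1 : ∀ a ∈ P, ∀ b ∈ P, a * b ∈ P)
    (hP2 : P ∩ P⁻¹ = {1}) (hP3 : P ∪ P⁻¹ = Set.univ)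
    (z : G) (hz : z ∈ P) (hz1 : z ≠ 1) (hzc : ∀ g : G, g * z = z * g) :
    (∃ H : Subgroup G, (H : Set G) = Gprime P z) ∧
    (∀ g ∈ Gprime P z, ∃! p : ℤ × G,
      g = z ^ p.1 * p.2 ∧ leP P 1 p.2 ∧ leP P p.2 z ∧ p.2 ≠ z) := by
  refine ⟨⟨Gprime.subgroup hP1 hP3 (Subgroup.mem_center_iff.mpr hzc), rfl⟩, fun g hg => ?_⟩
  obtain ⟨k, hk, hk'⟩ := exists_zpow_leP_not_leP_zpow_add_one hP1 hP2 hP3 hz hz1 hg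
  have hgk : g = z ^ k * (z ^ (-k) * g) := by group
  refine ⟨(k, z ^ (-k) * g), ⟨hgk, ?_⟩, ?_⟩
  · rw [leP_one_and_lt_iff_zpow_mul hP2 hP3 k, ← hgk]
    exact ⟨hk, hk'⟩
  · rintro ⟨j, w⟩ ⟨rfl, hw⟩
    rw [leP_one_and_lt_iff_zpow_mul hP2 hP3 j] at hw
    obtain rfl := eq_of_zpow_leP_not_leP_zpow_add_one hP1 hP3 hz hw.1 hw.2 hk hk'
    exact Prod.ext rfl (by group)
end

section
/- Let I be a finite interval (a finite totally ordered set with least element b and greatest element t > b), and let G = (ℤ × I)/∼ (identifying (n,t) with (n+1,b)) with the lexicographic order. Then there is exactly one group law on G such that the order is left-invariant and (n,b)·(m,u) = (m,u)·(n,b) = (n+m,u) for all n,m ∈ ℤ, u ∈ I; this group is isomorphic as an ordered group to ℤ. -/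
/-- The ordered set `G = (ℤ × I)/∼` (identifying `(n,t) ∼ (n+1,b)`), realized as
`ℤ ×ₗ (I \ {t})` with the lexicographic order. -/
abbrev GlexI (I : Type*) (t : I) := Lex (ℤ × {u : I // u ≠ t})

/-- `mul` is a group law on `G = (ℤ × I)/∼` with left-invariant order and
`(n,b)·(m,u) = (m,u)·(n,b) = (n+m,u)`. -/
def GoodMul (I : Type*) [LinearOrder I] (b t : I) (hbt : b ≠ t)
    (mul : GlexI I t → GlexI I t → GlexI I t) : Prop :=
  (∃ e : GlexI I t, ∃ inv : GlexI I t → GlexI I t,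
    (∀ x y z, mul (mul x y) z = mul x (mul y z)) ∧
    (∀ x, mul e x = x) ∧ (∀ x, mul x e = x) ∧ (∀ x, mul (inv x) x = e)) ∧
  (∀ k g h : GlexI I t, g ≤ h → mul k g ≤ mul k h) ∧
  (∀ (n m : ℤ) (u : {u : I // u ≠ t}),
    mul (toLex (n, (⟨b, hbt⟩ : {u : I // u ≠ t}))) (toLex (m, u)) = toLex (n + m, u) ∧
    mul (toLex (m, u)) (toLex (n, (⟨b, hbt⟩ : {u : I // u ≠ t}))) = toLex (n + m, u))


/-
The lexicographic order on `ℤ ×ₗ J`, for a finite nonempty linear order `J` of size `k`, is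
isomorphic to `ℤ` via `(n, j) ↦ n k + (index of j)`; call this `φ`. In a group law with
left-invariant order, left multiplication by `g` is an order automorphism, so conjugated by `φ`
it is an order automorphism of `ℤ`, i.e. a translation. As `(0, b)` is a right identity, the
translation is by `φ g`, so `φ` turns every admissible law into addition. This gives uniqueness
and the isomorphism with `ℤ`; transporting addition along `φ` gives existence.
-/

theorem Int.orderIso_apply_eq_add (f : ℤ ≃o ℤ) (m : ℤ) : f m = m + f 0 := by
  have succ : ∀ n, f (n + 1) = f n + 1 := fun n => by
    simpa only [Order.succ_eq_add_one] using f.map_succ n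
  induction m using Int.induction_on with
  | zero => simp
  | succ n ih => rw [succ, ih]; ring
  | pred n ih =>
    have := succ (-(n : ℤ) - 1)
    rw [sub_add_cancel] at this
    linarith

theorem bijective_mul_left_of_leftAxioms {G : Type*} {mul : G → G → G} {e : G} {inv : G → G}
    (assoc : ∀ x y z, mul (mul x y) z = mul x (mul y z)) (one_mul : ∀ x, mul e x = x)
    (inv_mul_cancel : ∀ x, mul (inv x) x = e) (g : G) : Function.Bijective (mul g) := by
  let : Mul G := ⟨mul⟩
  let : One G := ⟨e⟩
  let : Inv G := ⟨inv⟩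
  let : Group G := Group.ofLeftAxioms assoc one_mul inv_mul_cancel
  exact (Equiv.mulLeft g).bijective

theorem OrderIso.apply_mul_eq_add {G : Type*} [LinearOrder G] (φ : G ≃o ℤ) {mul : G → G → G}
    {e : G} (he : φ e = 0) (mul_e : ∀ g, mul g e = g) (mono : ∀ g, Monotone (mul g))
    (bij : ∀ g, Function.Bijective (mul g)) (g z : G) : φ (mul g z) = φ g + φ z := by
  -- `ψ = φ ∘ (mul g) ∘ φ⁻¹` is an order automorphism of `ℤ`, hence a translation.
  let ψ : ℤ ≃o ℤ := φ.symm.trans <|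
    ((mono g).strictMono_of_injective (bij g).1).orderIsoOfSurjective _ (bij g).2 |>.trans φ
  have := Int.orderIso_apply_eq_add ψ (φ z)
  simp only [ψ, OrderIso.trans_apply, StrictMono.coe_orderIsoOfSurjective,
    OrderIso.symm_apply_apply, ← he] at this
  rw [mul_e] at this
  rw [this, add_comm]

theorem Int.strictMono_lexFin (k : ℕ) :
    StrictMono fun p : ℤ ×ₗ Fin k => (ofLex p).1 * k + ((ofLex p).2 : ℤ) := by
  intro p q hpq
  rcases Prod.Lex.lt_iff.mp hpq with hlt | ⟨heq, hlt⟩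
  · have hp := (ofLex p).2.isLt
    have hsucc : (ofLex p).1 + 1 ≤ (ofLex q).1 := hlt
    simp only
    nlinarith
  · simp only [heq, add_lt_add_iff_left, Nat.cast_lt]
    exact hlt

def Int.lexFinOrderIso (k : ℕ) [NeZero k] : ℤ ×ₗ Fin k ≃o ℤ where
  toEquiv := ofLex.trans (Int.divModEquiv k).symm
  map_rel_iff' := (Int.strictMono_lexFin k).le_iff_le

section LexInt

variable (J : Type*) [LinearOrder J] [Fintype J] [Nonempty J]

noncomputable def lexIntOrderIso : ℤ ×ₗ J ≃o ℤ :=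
  (Prod.Lex.prodLexCongr (OrderIso.refl ℤ) (monoEquivOfFin J rfl).symm).trans
    (Int.lexFinOrderIso _)

variable {J}

theorem lexIntOrderIso_toLex (n : ℤ) (j : J) :
    lexIntOrderIso J (toLex (n, j)) = n * Fintype.card J + ((monoEquivOfFin J rfl).symm j : ℕ) :=
  rfl

theorem lexIntOrderIso_toLex_add_of_isBot {j₀ : J} (hj₀ : IsBot j₀) (n m : ℤ) (j : J) :
    lexIntOrderIso J (toLex (n + m, j)) =
      lexIntOrderIso J (toLex (n, j₀)) + lexIntOrderIso J (toLex (m, j)) := by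
  have h0 : ((monoEquivOfFin J rfl).symm j₀ : ℕ) = 0 := by
    simpa using (monoEquivOfFin J rfl).symm.monotone (hj₀ (monoEquivOfFin J rfl 0))
  simp only [lexIntOrderIso_toLex, h0]
  push_cast
  ring

end LexInt

section GoodMul

variable {I : Type*} [LinearOrder I] {b t : I} {hbt : b ≠ t} (φ : GlexI I t ≃o ℤ)

theorem goodMul_transferAdd
    (hφ : ∀ n m u, φ (toLex (n + m, u)) = φ (toLex (n, ⟨b, hbt⟩)) + φ (toLex (m, u))) :
    GoodMul I b t hbt fun x y => φ.symm (φ x + φ y) := by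
  refine ⟨⟨φ.symm 0, fun x => φ.symm (-φ x), ?_, ?_, ?_, ?_⟩, ?_, ?_⟩
  · intro x y z; simp [add_assoc]
  · intro x; simp
  · intro x; simp
  · intro x; simp
  · intro k g h hgh
    exact φ.symm.monotone (add_le_add_right (φ.monotone hgh) _)
  · intro n m u
    constructor
    · rw [OrderIso.symm_apply_eq, hφ]
    · rw [OrderIso.symm_apply_eq, hφ, add_comm]

theorem GoodMul.apply_mul_eq_add
    (hφ : ∀ n m u, φ (toLex (n + m, u)) = φ (toLex (n, ⟨b, hbt⟩)) + φ (toLex (m, u)))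
    {mul : GlexI I t → GlexI I t → GlexI I t} (h : GoodMul I b t hbt mul) (x y : GlexI I t) :
    φ (mul x y) = φ x + φ y := by
  obtain ⟨⟨e, inv, assoc, one_mul, -, inv_mul_cancel⟩, mono, central⟩ := h
  have h0 : φ (toLex (0, ⟨b, hbt⟩)) = 0 := by simpa using hφ 0 0 ⟨b, hbt⟩
  exact φ.apply_mul_eq_add h0 (fun g => by simpa using (central 0 (ofLex g).1 (ofLex g).2).2)
    (fun g _ _ => mono g _ _) (bijective_mul_left_of_leftAxioms assoc one_mul inv_mul_cancel) x y

end GoodMul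

theorem stmt12_general (I : Type*) [LinearOrder I] [Finite I] (b t : I)
    (hb : ∀ x : I, b ≤ x) (hbt : b ≠ t) :
    (∃ mul, GoodMul I b t hbt mul) ∧
    (∀ mul₁ mul₂, GoodMul I b t hbt mul₁ → GoodMul I b t hbt mul₂ → mul₁ = mul₂) ∧
    (∀ mul, GoodMul I b t hbt mul →
      ∃ φ : GlexI I t ≃o ℤ, ∀ x y, φ (mul x y) = φ x + φ y) := by
  classical
  have : Fintype I := Fintype.ofFinite I
  have : Nonempty {u : I // u ≠ t} := ⟨⟨b, hbt⟩⟩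
  let φ := lexIntOrderIso {u : I // u ≠ t}
  have hφ := lexIntOrderIso_toLex_add_of_isBot (j₀ := (⟨b, hbt⟩ : {u : I // u ≠ t})) fun u => hb u
  refine ⟨⟨_, goodMul_transferAdd φ hφ⟩, fun mul₁ mul₂ h₁ h₂ => ?_,
    fun mul h => ⟨φ, h.apply_mul_eq_add φ hφ⟩⟩
  funext x y
  exact φ.injective ((h₁.apply_mul_eq_add φ hφ x y).trans (h₂.apply_mul_eq_add φ hφ x y).symm)

/-- For a finite interval `I`, there is exactly one group law on `G = (ℤ × I)/∼` with
left-invariant lexicographic order and the prescribed central `ℤ`; the resulting ordered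
group is isomorphic to `ℤ`. -/
theorem stmt12 (I : Type*) [LinearOrder I] [Finite I] (b t : I)
    (hb : ∀ x : I, b ≤ x) (ht : ∀ x : I, x ≤ t) (hbt : b ≠ t) :
    (∃ mul, GoodMul I b t hbt mul) ∧
    (∀ mul₁ mul₂, GoodMul I b t hbt mul₁ → GoodMul I b t hbt mul₂ → mul₁ = mul₂) ∧
    (∀ mul, GoodMul I b t hbt mul →
      ∃ φ : GlexI I t ≃o ℤ, ∀ x y, φ (mul x y) = φ x + φ y) :=
  stmt12_general I b t hb hbt
end

section
/- Let c be a 2-cocycle on a group H with values in ℤ satisfying c(x,y) ≥ 0 for all x, y, c(1,x) = c(x,1) = 0, and c(x⁻¹, x) = 1 for all x ≠ 1. Then in the extension G = ℤ ×_c H with product (n,x)(m,y) = (n+m+c(x,y), xy), the set P = {(n,x) : n ≥ 0} is a subsemigroup with P ∩ P⁻¹ = {(0,1)} and P ∪ P⁻¹ = G; i.e. P defines a left order on G. -/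
open Classical in
/-- The inverse in the extension `ℤ ×_c H` (for a cocycle with `c(x⁻¹,x) = 1` for `x ≠ 1`). -/
noncomputable def extInv {H : Type*} [Group H] (p : ℤ × H) : ℤ × H :=
  if p.2 = 1 then (-p.1, 1) else (-p.1 - 1, p.2⁻¹)

/-- The product in the extension `ℤ ×_c H`. -/
def extMul {H : Type*} [Group H] (c : H → H → ℤ) (a b : ℤ × H) : ℤ × H :=
  (a.1 + b.1 + c a.2 b.2, a.2 * b.2)

section Extension

variable {H : Type*} [Group H] {c : H → H → ℤ}

theorem cocycle_mul_inv_eq_one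
    (hcoc : ∀ x y z : H, c y z - c (x * y) z + c x (y * z) - c x y = 0)
    (h1 : ∀ x : H, c 1 x = 0 ∧ c x 1 = 0) {x : H} (hx : c x⁻¹ x = 1) : c x x⁻¹ = 1 := by
  have h := hcoc x x⁻¹ x
  rw [hx, mul_inv_cancel, inv_mul_cancel, (h1 x).1, (h1 x).2] at h
  omega

theorem extMul_fst_nonneg (hnn : ∀ x y : H, 0 ≤ c x y) {a b : ℤ × H}
    (ha : 0 ≤ a.1) (hb : 0 ≤ b.1) : 0 ≤ (extMul c a b).1 := by
  have := hnn a.2 b.2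
  simp only [extMul]
  omega

variable (hcoc : ∀ x y z : H, c y z - c (x * y) z + c x (y * z) - c x y = 0)
  (h1 : ∀ x : H, c 1 x = 0 ∧ c x 1 = 0) (hinv : ∀ x : H, x ≠ 1 → c x⁻¹ x = 1)
include h1 hinv

theorem extInv_extMul (p : ℤ × H) : extMul c (extInv p) p = (0, 1) := by
  by_cases hp : p.2 = 1
  · simp [extMul, extInv, hp, (h1 _).1]
  · simp only [extMul, extInv, hp, ↓reduceIte, hinv p.2 hp, inv_mul_cancel, Prod.mk.injEq, and_true]
    omega

include hcoc in
theorem extMul_extInv (p : ℤ × H) : extMul c p (extInv p) = (0, 1) := by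
  by_cases hp : p.2 = 1
  · simp [extMul, extInv, hp, (h1 _).1]
  · simp only [extMul, extInv, hp, ↓reduceIte, cocycle_mul_inv_eq_one hcoc h1 (hinv p.2 hp),
      mul_inv_cancel, Prod.mk.injEq, and_true]
    omega

end Extension

theorem extInv_fst_nonneg_iff {H : Type*} [Group H] {p : ℤ × H} (hp : 0 ≤ p.1) :
    0 ≤ (extInv p).1 ↔ p = (0, 1) := by
  by_cases h : p.2 = 1
  · simp only [extInv, h, if_true, Left.nonneg_neg_iff, Prod.ext_iff, and_true]
    omega
  · simp only [extInv, h, if_false, Prod.ext_iff, and_false, iff_false]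
    omega

theorem fst_nonneg_or_extInv_fst_nonneg {H : Type*} [Group H] (p : ℤ × H) :
    0 ≤ p.1 ∨ 0 ≤ (extInv p).1 := by
  unfold extInv
  split_ifs <;> dsimp only <;> omega

/-- For a nonnegative normalized `ℤ`-valued 2-cocycle `c` on `H` with `c(x⁻¹,x) = 1` for
`x ≠ 1`, the set `P = {(n,x) : n ≥ 0}` defines a left order on `G = ℤ ×_c H`:
it is a subsemigroup with `P ∩ P⁻¹ = {1}` and `P ∪ P⁻¹ = G`. -/
theorem stmt16 (H : Type*) [Group H] (c : H → H → ℤ)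
    (hcoc : ∀ x y z : H, c y z - c (x * y) z + c x (y * z) - c x y = 0)
    (hnn : ∀ x y : H, 0 ≤ c x y)
    (h1 : ∀ x : H, c 1 x = 0 ∧ c x 1 = 0)
    (hinv : ∀ x : H, x ≠ 1 → c x⁻¹ x = 1) :
    (∀ a b : ℤ × H, 0 ≤ a.1 → 0 ≤ b.1 → 0 ≤ (extMul c a b).1) ∧
    (∀ p : ℤ × H, extMul c p (extInv p) = ((0 : ℤ), (1 : H)) ∧
      extMul c (extInv p) p = ((0 : ℤ), (1 : H))) ∧
    ({p : ℤ × H | 0 ≤ p.1 ∧ 0 ≤ (extInv p).1} = {((0 : ℤ), (1 : H))}) ∧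
    (∀ p : ℤ × H, 0 ≤ p.1 ∨ 0 ≤ (extInv p).1) := by
  refine ⟨fun a b ha hb => extMul_fst_nonneg hnn ha hb,
    fun p => ⟨extMul_extInv hcoc h1 hinv p, extInv_extMul h1 hinv p⟩, ?_,
    fst_nonneg_or_extInv_fst_nonneg⟩
  ext p
  constructor
  · rintro ⟨hp, hinvp⟩
    exact (extInv_fst_nonneg_iff hp).1 hinvp
  · rintro rfl
    exact ⟨le_rfl, (extInv_fst_nonneg_iff le_rfl).2 rfl⟩
end

section
/- Let (X, θ) be an archimedean set: X a nonempty totally ordered set with an order automorphism θ satisfying θ(x) > x for all x and for all x,y there exists n ∈ ℕ with y ≤ θⁿ(x). Fix x₀ ∈ X. Then every element y ∈ X can be written uniquely as θᵏ(u) with k ∈ ℤ and u ∈ [x₀, θ(x₀)) = {u : x₀ ≤ u < θ(x₀)}. -/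
/-!
The orbit `k ↦ θᵏ x₀` is strictly increasing and, by the archimedean property, unbounded in
both directions, so `y` lies in exactly one interval `[θᵏ x₀, θᵏ⁺¹ x₀)`. As `θᵏ` is an order
automorphism carrying `[x₀, θ x₀)` onto that interval, `u = θ⁻ᵏ y` is forced.
-/

open Set

theorem StrictMono.existsUnique_int_mem_Ico {α : Type*} [LinearOrder α] {f : ℤ → α}
    (hf : StrictMono f) {y : α} (hlo : ∃ a, f a ≤ y) (hhi : ∃ b, y < f b) :
    ∃! k : ℤ, y ∈ Ico (f k) (f (k + 1)) := by
  obtain ⟨b, hb⟩ := hhi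
  have hbdd : ∀ k, f k ≤ y → k ≤ b := fun k hk => (hf.lt_iff_lt.1 (hk.trans_lt hb)).le
  obtain ⟨k, hk, hmax⟩ := Int.exists_greatest_of_bdd ⟨b, hbdd⟩ hlo
  have hyk : y < f (k + 1) := lt_of_not_ge fun h => absurd (hmax _ h) (by omega)
  refine ⟨k, ⟨hk, hyk⟩, fun j ⟨hjy, hyj⟩ => ?_⟩
  have hjk : j < k + 1 := hf.lt_iff_lt.1 (hjy.trans_lt hyk)
  have hkj : k < j + 1 := hf.lt_iff_lt.1 (hk.trans_lt hyj)
  omega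

namespace Equiv.Perm

variable {X : Type*} [LinearOrder X] {θ : Perm X}

theorem strictMono_zpow (h : StrictMono θ) (k : ℤ) : StrictMono ⇑(θ ^ k) := by
  have hinv : StrictMono ⇑θ⁻¹ := fun a b hab => h.lt_iff_lt.1 (by simpa using hab)
  cases k with
  | ofNat n => simpa [coe_pow] using h.iterate n
  | negSucc n => simpa [zpow_negSucc, ← inv_pow, coe_pow] using hinv.iterate (n + 1)

theorem strictMono_zpow_apply (h : ∀ x, x < θ x) (x : X) : StrictMono fun k : ℤ => (θ ^ k) x :=
  strictMono_int_of_lt_succ fun k => by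
    rw [add_comm, zpow_add, zpow_one, mul_apply]
    exact h _

theorem zpow_apply_mem_Ico_iff (h : StrictMono θ) (k : ℤ) (x u : X) :
    (θ ^ k) u ∈ Ico ((θ ^ k) x) ((θ ^ (k + 1)) x) ↔ u ∈ Ico x (θ x) := by
  rw [zpow_add_one, mul_apply]
  simp only [mem_Ico, (strictMono_zpow h k).le_iff_le, (strictMono_zpow h k).lt_iff_lt]

end Equiv.Perm

open Equiv.Perm

/-- In an archimedean set `(X, θ)`, fixing `x₀ ∈ X`, every `y ∈ X` is uniquely
`θᵏ(u)` with `k ∈ ℤ` and `u ∈ [x₀, θ(x₀))`. -/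
theorem stmt17 (X : Type*) [LinearOrder X] (θ : Equiv.Perm X)
    (hmono : ∀ a b : X, a ≤ b ↔ θ a ≤ θ b)
    (hgt : ∀ x : X, x < θ x)
    (harch : ∀ x y : X, ∃ n : ℕ, y ≤ (θ ^ n) x)
    (x₀ y : X) :
    ∃! p : ℤ × X, (θ ^ p.1) p.2 = y ∧ x₀ ≤ p.2 ∧ p.2 < θ x₀ := by
  have hθ : StrictMono θ :=
    Monotone.strictMono_of_injective (fun a b => (hmono a b).1) θ.injective
  have horbit := strictMono_zpow_apply hgt x₀
  have hlo : ∃ a : ℤ, (θ ^ a) x₀ ≤ y := by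
    obtain ⟨n, hn⟩ := harch y x₀
    exact ⟨-n, by simpa [zpow_neg] using (strictMono_zpow hθ (-n)).monotone hn⟩
  have hhi : ∃ b : ℤ, y < (θ ^ b) x₀ := by
    obtain ⟨n, hn⟩ := harch x₀ y
    exact ⟨n + 1, hn.trans_lt (by simpa using horbit (lt_add_one (n : ℤ)))⟩
  obtain ⟨k, hk, huniq⟩ := horbit.existsUnique_int_mem_Ico hlo hhi
  have hy : (θ ^ k) ((θ ^ k)⁻¹ y) = y := (θ ^ k).apply_symm_apply y
  refine ⟨(k, (θ ^ k)⁻¹ y), ⟨hy, (zpow_apply_mem_Ico_iff hθ k x₀ _).1 (by rwa [hy])⟩, ?_⟩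
  rintro ⟨j, v⟩ ⟨rfl, hv⟩
  obtain rfl := huniq j ((zpow_apply_mem_Ico_iff hθ j x₀ v).2 hv)
  simp
end
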